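/- Let ε ≤ 1/4 and let M be any probability distribution on {0,1}^{n+2}. If r, t ∈ {0,1}^n satisfy d_TV(M, M_r) < ε and d_TV(M, M_t) < ε, then r = t. In other words, there is at most one s ∈ {0,1}^n such that M_s is within total variation distance less than 1/4 of M. -/

import Mathlib

/-- The parity function `χ_s(x) = x · s mod 2`. -/
def chi {n : ℕ} (s x : Fin n → ZMod 2) : ZMod 2 := ∑ i, s i * x i

/-- The parity `|x|` of a bitstring: the sum of its bits mod 2. -/
def par {n : ℕ} (x : Fin n → ZMod 2) : ZMod 2 := ∑ i, x i

/-- The fermionized parity distribution `M_s` on `{0,1}^{n+2}`: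
`M_s(x,y,z) = 2^{-n}` if `χ_s(x) = y` and `|x| + y = z`, and `0` otherwise. -/
noncomputable def Mdist {n : ℕ} (s : Fin n → ZMod 2) (x : Fin n → ZMod 2) (y z : ZMod 2) : ℝ :=
  if chi s x = y ∧ par x + y = z then ((2 : ℝ) ^ n)⁻¹ else 0

lemma chi_update {n : ℕ} (d x : Fin n → ZMod 2) (i : Fin n) (hi : d i = 1) :
    chi d (Function.update x i (x i + 1)) = chi d x + 1 := by
  unfold chi
  rw [← Finset.add_sum_erase _ (fun j => d j * Function.update x i (x i + 1) j) (Finset.mem_univ i),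
    ← Finset.add_sum_erase _ (fun j => d j * x j) (Finset.mem_univ i)]
  have hrest : ∀ j ∈ Finset.univ.erase i,
      d j * Function.update x i (x i + 1) j = d j * x j := by
    intro j hj
    rw [Function.update_of_ne (Finset.ne_of_mem_erase hj)]
  rw [Finset.sum_congr rfl hrest, Function.update_self, hi]
  ring

lemma card_bad {n : ℕ} (d : Fin n → ZMod 2) (hd : d ≠ 0) :
    2 * (Finset.univ.filter (fun x : Fin n → ZMod 2 => chi d x = 1)).card = 2 ^ n := by
  obtain ⟨i, hi⟩ : ∃ i, d i ≠ 0 := by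
    by_contra h; push_neg at h; exact hd (funext fun i => h i)
  have hi1 : d i = 1 := by
    revert hi; generalize d i = a; revert a; decide
  have hcard : (Finset.univ.filter (fun x : Fin n → ZMod 2 => chi d x = 1)).card
      = (Finset.univ.filter (fun x : Fin n → ZMod 2 => ¬ chi d x = 1)).card := by
    apply Finset.card_nbij' (fun x => Function.update x i (x i + 1))
      (fun x => Function.update x i (x i + 1))
    · intro x hx
      simp only [Finset.mem_coe, Finset.mem_filter, Finset.mem_univ, true_and] at hx ⊢
      rw [chi_update d x i hi1, hx]; decide
    · intro x hx
      simp only [Finset.mem_coe, Finset.mem_filter, Finset.mem_univ, true_and] at hx ⊢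
      rw [chi_update d x i hi1]
      revert hx; generalize chi d x = a; revert a; decide
    · intro x _
      funext j
      by_cases hj : j = i
      · subst hj; simp; ring_nf; rw [show ((2:ZMod 2)) = 0 from rfl]; ring
      · simp [Function.update_of_ne hj]
    · intro x _
      funext j
      by_cases hj : j = i
      · subst hj; simp; ring_nf; rw [show ((2:ZMod 2)) = 0 from rfl]; ring
      · simp [Function.update_of_ne hj]
  have := Finset.card_filter_add_card_filter_not
    (s := (Finset.univ : Finset (Fin n → ZMod 2)))
    (p := fun x => chi d x = 1)
  rw [← hcard] at this
  have huniv : (Finset.univ : Finset (Fin n → ZMod 2)).card = 2 ^ n := by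
    simp [Finset.card_univ]
  omega

lemma Mdist_sum {n : ℕ} (s x : Fin n → ZMod 2) :
    ∑ y : ZMod 2, ∑ z : ZMod 2, Mdist s x y z = ((2:ℝ) ^ n)⁻¹ := by
  unfold Mdist
  have : ∀ y : ZMod 2, ∑ z : ZMod 2, (if chi s x = y ∧ par x + y = z then ((2:ℝ) ^ n)⁻¹ else 0)
      = if chi s x = y then ((2:ℝ) ^ n)⁻¹ else 0 := by
    intro y
    by_cases h : chi s x = y
    · simp [h, Finset.sum_ite_eq (Finset.univ : Finset (ZMod 2)) (par x + y)]
    · simp [h]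
  rw [Finset.sum_congr rfl fun y _ => this y]
  simp [Finset.sum_ite_eq (Finset.univ : Finset (ZMod 2)) (chi s x)]

/-- If `ε ≤ 1/4` and `M` is a probability distribution on `{0,1}^{n+2}` with
`d_TV(M, M_r) < ε` and `d_TV(M, M_t) < ε`, then `r = t`: at most one fermionized parity
distribution is within total variation distance less than `1/4` of `M`. -/
theorem unique_close_Mdist (n : ℕ) (ε : ℝ) (hε : ε ≤ 1 / 4)
    (M : (Fin n → ZMod 2) → ZMod 2 → ZMod 2 → ℝ)
    (hM0 : ∀ x y z, 0 ≤ M x y z)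
    (hM1 : (∑ x : Fin n → ZMod 2, ∑ y : ZMod 2, ∑ z : ZMod 2, M x y z) = 1)
    (r t : Fin n → ZMod 2)
    (hr : (1 / 2 : ℝ) * (∑ x : Fin n → ZMod 2, ∑ y : ZMod 2, ∑ z : ZMod 2,
      |M x y z - Mdist r x y z|) < ε)
    (ht : (1 / 2 : ℝ) * (∑ x : Fin n → ZMod 2, ∑ y : ZMod 2, ∑ z : ZMod 2,
      |M x y z - Mdist t x y z|) < ε) :
    r = t := by
  by_contra hne
  set c : ℝ := ((2:ℝ) ^ n)⁻¹ with hc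
  have hcpos : 0 ≤ c := by positivity
  -- the difference sum equals 1
  have hd : r + t ≠ 0 := by
    intro h
    apply hne
    funext i
    have h2 : r i + t i = 0 := by simpa using congrFun h i
    revert h2
    generalize r i = a; generalize t i = b
    revert a b; decide
  have hchi_add : ∀ x, chi (r + t) x = chi r x + chi t x := by
    intro x
    unfold chi
    rw [← Finset.sum_add_distrib]
    exact Finset.sum_congr rfl fun i _ => by simp [add_mul]
  have key : ∀ x : Fin n → ZMod 2,
      ∑ y : ZMod 2, ∑ z : ZMod 2, |Mdist r x y z - Mdist t x y z|
      = if chi (r + t) x = 1 then 2 * c else 0 := by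
    intro x
    by_cases h : chi r x = chi t x
    · have h1 : chi (r + t) x ≠ 1 := by
        rw [hchi_add, h]; generalize chi t x = a; revert a; decide
      simp only [if_neg h1]
      have : ∀ y z : ZMod 2, Mdist r x y z = Mdist t x y z := by
        intro y z; unfold Mdist; rw [h]
      simp [this]
    · have h1 : chi (r + t) x = 1 := by
        rw [hchi_add]; revert h; generalize chi r x = a; generalize chi t x = b
        revert a b; decide
      simp only [if_pos h1]
      have habs : ∀ y z : ZMod 2, |Mdist r x y z - Mdist t x y z|
          = Mdist r x y z + Mdist t x y z := by
        intro y z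
        unfold Mdist
        split_ifs with ha hb hb
        · exact absurd (ha.1.trans hb.1.symm) h
        · simp [abs_of_nonneg, hcpos]
        · rw [zero_sub, abs_neg, abs_of_nonneg hcpos]; ring
        · simp
      calc ∑ y : ZMod 2, ∑ z : ZMod 2, |Mdist r x y z - Mdist t x y z|
          = ∑ y : ZMod 2, ∑ z : ZMod 2, (Mdist r x y z + Mdist t x y z) := by
            exact Finset.sum_congr rfl fun y _ => Finset.sum_congr rfl fun z _ => habs y z
        _ = (∑ y : ZMod 2, ∑ z : ZMod 2, Mdist r x y z)
            + ∑ y : ZMod 2, ∑ z : ZMod 2, Mdist t x y z := by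
            rw [← Finset.sum_add_distrib]
            exact Finset.sum_congr rfl fun y _ => by rw [Finset.sum_add_distrib]
        _ = 2 * c := by rw [Mdist_sum, Mdist_sum, hc]; ring
  have hsum1 : ∑ x : Fin n → ZMod 2, ∑ y : ZMod 2, ∑ z : ZMod 2,
      |Mdist r x y z - Mdist t x y z| = 1 := by
    rw [Finset.sum_congr rfl fun x _ => key x]
    simp only [Finset.sum_ite, Finset.sum_const, Finset.sum_const_zero, add_zero, nsmul_eq_mul]
    have := card_bad (r + t) hd
    have h2 : ((Finset.univ.filter (fun x : Fin n → ZMod 2 => chi (r + t) x = 1)).card : ℝ)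
        * (2 * c) = 1 := by
      have h3 : ((Finset.univ.filter (fun x : Fin n → ZMod 2 => chi (r + t) x = 1)).card : ℝ) * 2
          = 2 ^ n := by exact_mod_cast by omega
      rw [hc]
      have hpow : (0:ℝ) < 2 ^ n := by positivity
      field_simp
      linarith
    linarith [h2]
  -- triangle inequality
  have htri : (1:ℝ) ≤ ∑ x : Fin n → ZMod 2, ∑ y : ZMod 2, ∑ z : ZMod 2,
      (|M x y z - Mdist r x y z| + |M x y z - Mdist t x y z|) := by
    rw [← hsum1]
    apply Finset.sum_le_sum; intro x _
    apply Finset.sum_le_sum; intro y _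
    apply Finset.sum_le_sum; intro z _
    calc |Mdist r x y z - Mdist t x y z|
        = |(M x y z - Mdist t x y z) - (M x y z - Mdist r x y z)| := by ring_nf
      _ ≤ |M x y z - Mdist r x y z| + |M x y z - Mdist t x y z| := by
          rw [add_comm]; exact (abs_sub _ _).trans_eq rfl
  have hsplit : ∑ x : Fin n → ZMod 2, ∑ y : ZMod 2, ∑ z : ZMod 2,
      (|M x y z - Mdist r x y z| + |M x y z - Mdist t x y z|)
      = (∑ x : Fin n → ZMod 2, ∑ y : ZMod 2, ∑ z : ZMod 2, |M x y z - Mdist r x y z|)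
      + ∑ x : Fin n → ZMod 2, ∑ y : ZMod 2, ∑ z : ZMod 2, |M x y z - Mdist t x y z| := by
    rw [← Finset.sum_add_distrib]
    refine Finset.sum_congr rfl fun x _ => ?_
    rw [← Finset.sum_add_distrib]
    refine Finset.sum_congr rfl fun y _ => ?_
    rw [← Finset.sum_add_distrib]
  rw [hsplit] at htri
  linarith
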